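/- arXiv:2204.04765 — 3 statements merged into one kernel-verified Lean document; each statement's English description precedes it below -/
import Mathlib

section
/- Let G = (V,E) be a finite undirected simple graph. The map f ↦ V₂(f) is a bijection between the set of minimal Roman dominating functions f : V → {0,1,2} on G and the set of subsets V₂ ⊆ V satisfying the condition that P_{G,V₂}(v) ⊄ {v} for every v ∈ V₂. -/
variable {V : Type*}

/-- Closed neighborhood N_G[v] of a vertex. -/
def closedNbhd (G : SimpleGraph V) (v : V) : Set V :=
  {w | w = v ∨ G.Adj v w}

/-- Closed neighborhood N_G[U] of a set of vertices. -/
def closedNbhdSet (G : SimpleGraph V) (U : Set V) : Set V :=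
  ⋃ u ∈ U, closedNbhd G u

/-- Private neighborhood of v w.r.t. D in G: N_G[v] \ N_G[D \ {v}]. -/
def privateNbhd (G : SimpleGraph V) (D : Set V) (v : V) : Set V :=
  closedNbhd G v \ closedNbhdSet G (D \ {v})

/-- Closed neighborhood of v in the subgraph of G induced by U. -/
def indClosedNbhd (G : SimpleGraph V) (U : Set V) (v : V) : Set V :=
  {w | v ∈ U ∧ w ∈ U ∧ (w = v ∨ G.Adj v w)}

/-- Private neighborhood of v w.r.t. D inside the subgraph of G induced by U. -/
def indPrivateNbhd (G : SimpleGraph V) (U D : Set V) (v : V) : Set V :=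
  indClosedNbhd G U v \ ⋃ u ∈ D \ {v}, indClosedNbhd G U u

/-- Roman dominating function. -/
def IsRDF (G : SimpleGraph V) (f : V → Fin 3) : Prop :=
  ∀ v, f v = 0 → ∃ u, G.Adj v u ∧ f u = 2

/-- Minimal Roman dominating function (w.r.t. the pointwise order from 0 < 1 < 2). -/
def IsMinimalRDF (G : SimpleGraph V) (f : V → Fin 3) : Prop :=
  IsRDF G f ∧ ∀ g : V → Fin 3, IsRDF G g → (∀ v, g v ≤ f v) → g = f

/-- D is a dominating set of the subgraph of G induced by U. -/
def IsDomSetOn (G : SimpleGraph V) (U D : Set V) : Prop :=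
  D ⊆ U ∧ ∀ w ∈ U, ∃ u ∈ D, w = u ∨ G.Adj u w

/-- D is a minimal dominating set of the subgraph of G induced by U. -/
def IsMinDomSetOn (G : SimpleGraph V) (U D : Set V) : Prop :=
  IsDomSetOn G U D ∧ ∀ D' : Set V, D' ⊂ D → ¬ IsDomSetOn G U D'

lemma mem_closedNbhdSet {G : SimpleGraph V} {U : Set V} {w : V} :
    w ∈ closedNbhdSet G U ↔ ∃ u ∈ U, w = u ∨ G.Adj u w := by
  simp [closedNbhdSet, closedNbhd]

/-- If g ≤ f, both RDFs, and g v < f v, then lowering f only at v is still an RDF. -/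
lemma update_rdf [DecidableEq V] {G : SimpleGraph V} {f g : V → Fin 3} (hf : IsRDF G f)
    (hg : IsRDF G g) (hle : ∀ v, g v ≤ f v) {v : V} (hv : g v < f v) :
    IsRDF G (Function.update f v (g v)) := by
  intro w hw
  by_cases hwv : w = v
  · subst hwv
    rw [Function.update_self] at hw
    obtain ⟨u, hu, hu2⟩ := hg w hw
    have hne : u ≠ w := by rintro rfl; omega
    refine ⟨u, hu, ?_⟩
    rw [Function.update_of_ne hne]
    have := hle u; omega
  · rw [Function.update_of_ne hwv] at hw
    have hgw : g w = 0 := by have := hle w; omega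
    obtain ⟨u, hu, hu2⟩ := hg w hgw
    have hne : u ≠ v := by rintro rfl; have := hle u; omega
    refine ⟨u, hu, ?_⟩
    rw [Function.update_of_ne hne]
    have := hle u; omega

/-- Characterization of minimal RDFs. -/
lemma minimalRDF_iff {G : SimpleGraph V} {f : V → Fin 3} :
    IsMinimalRDF G f ↔ IsRDF G f ∧
      (∀ v, f v = 1 → ∀ u, G.Adj v u → f u ≠ 2) ∧
      (∀ v, f v = 2 → ¬ privateNbhd G {w | f w = 2} v ⊆ {v}) := by
  classical
  constructor
  · rintro ⟨hf, hmin⟩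
    refine ⟨hf, ?_, ?_⟩
    · intro v hv1 u hu hu2
      -- lower f at v from 1 to 0
      set g := Function.update f v 0 with hg
      have hgR : IsRDF G g := by
        intro w hw
        by_cases hwv : w = v
        · subst hwv
          exact ⟨u, hu, by rw [hg, Function.update_of_ne (by rintro rfl; rw [hv1] at hu2; omega)]; exact hu2⟩
        · rw [hg, Function.update_of_ne hwv] at hw
          obtain ⟨u', hu', hu'2⟩ := hf w hw
          refine ⟨u', hu', ?_⟩
          rw [hg, Function.update_of_ne (by rintro rfl; rw [hv1] at hu'2; omega)]
          exact hu'2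
      have hgle : ∀ w, g w ≤ f w := by
        intro w
        by_cases hwv : w = v
        · subst hwv; rw [hg, Function.update_self]; omega
        · rw [hg, Function.update_of_ne hwv]
      have := congrFun (hmin g hgR hgle) v
      rw [hg, Function.update_self] at this
      rw [hv1] at this; omega
    · intro v hv2 hsub
      -- lower f at v from 2 to 1
      set g := Function.update f v 1 with hg
      have hgR : IsRDF G g := by
        intro w hw
        have hwv : w ≠ v := by
          rintro rfl; rw [hg, Function.update_self] at hw; omega
        rw [hg, Function.update_of_ne hwv] at hw
        obtain ⟨u', hu', hu'2⟩ := hf w hw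
        by_cases huv : u' = v
        · -- w is adjacent to v; w ∈ N[v]; w ∉ {v}; so w ∈ N[V₂\{v}]
          subst huv
          have hwmem : w ∈ closedNbhd G u' := Or.inr hu'.symm
          have : w ∈ closedNbhdSet G ({w | f w = 2} \ {u'}) := by
            by_contra hc
            exact hwv (hsub ⟨hwmem, hc⟩)
          obtain ⟨u'', ⟨hu''2, hu''v⟩, hcase⟩ := mem_closedNbhdSet.mp this
          rcases hcase with rfl | hadj
          · rw [Set.mem_setOf_eq, hw] at hu''2; omega
          · exact ⟨u'', hadj.symm, by rw [hg, Function.update_of_ne hu''v]; exact hu''2⟩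
        · exact ⟨u', hu', by rw [hg, Function.update_of_ne huv]; exact hu'2⟩
      have hgle : ∀ w, g w ≤ f w := by
        intro w
        by_cases hwv : w = v
        · subst hwv; rw [hg, Function.update_self, hv2]; omega
        · rw [hg, Function.update_of_ne hwv]
      have := congrFun (hmin g hgR hgle) v
      rw [hg, Function.update_self, hv2] at this; omega
  · rintro ⟨hf, h1, h2⟩
    refine ⟨hf, ?_⟩
    intro g hg hle
    by_contra hne
    have : ∃ v, g v ≠ f v := by
      by_contra h; push_neg at h; exact hne (funext h)
    obtain ⟨v, hv⟩ := this
    have hvlt : g v < f v := lt_of_le_of_ne (hle v) hv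
    have hR := update_rdf hf hg hle hvlt
    rcases (show f v = 1 ∨ f v = 2 by omega) with hfv | hfv
    · -- g v = 0; update f v to 0 is RDF, so v has a neighbor with value 2 in update
      have hgv : g v = 0 := by omega
      obtain ⟨u, hu, hu2⟩ := hR v (by rw [Function.update_self, hgv])
      have hune : u ≠ v := by rintro rfl; rw [Function.update_self] at hu2; omega
      rw [Function.update_of_ne hune] at hu2
      exact h1 v hfv u hu hu2
    · -- f v = 2; show privateNbhd ⊆ {v}, contradiction with h2
      refine h2 v hfv ?_
      intro w hw
      by_contra hwv
      simp only [Set.mem_singleton_iff] at hwv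
      obtain ⟨hwN, hwD⟩ := hw
      have hwne2 : f w ≠ 2 := by
        intro hw2
        exact hwD (mem_closedNbhdSet.mpr ⟨w, ⟨hw2, hwv⟩, Or.inl rfl⟩)
      have hadj : G.Adj v w := by
        rcases hwN with h | h
        · exact absurd h hwv
        · exact h
      have hfw : f w = 0 := by
        rcases (show f w = 0 ∨ f w = 1 by omega) with h | h
        · exact h
        · exact absurd hfv (h1 w h v hadj.symm)
      obtain ⟨u, hu, hu2⟩ := hR w (by rw [Function.update_of_ne hwv]; exact hfw)
      have hune : u ≠ v := by
        rintro rfl; rw [Function.update_self] at hu2; omega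
      rw [Function.update_of_ne hune] at hu2
      exact hwD (mem_closedNbhdSet.mpr ⟨u, ⟨hu2, hune⟩, Or.inr hu.symm⟩)

/-- The canonical minimal RDF associated to a set D. -/
noncomputable def rdfOf (G : SimpleGraph V) (D : Set V) (v : V) : Fin 3 :=
  by classical exact if v ∈ D then 2 else if ∃ u, G.Adj v u ∧ u ∈ D then 0 else 1

lemma rdfOf_V2 (G : SimpleGraph V) (D : Set V) : {v | rdfOf G D v = 2} = D := by
  ext v
  simp only [Set.mem_setOf_eq, rdfOf]
  split_ifs with h h'
  · simp [h]
  · simp [h]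
  · simpa using h

theorem stmt_9 [Fintype V] (G : SimpleGraph V) :
    Set.BijOn (fun f : V → Fin 3 => {v | f v = 2})
      {f : V → Fin 3 | IsMinimalRDF G f}
      {D : Set V | ∀ v ∈ D, ¬ privateNbhd G D v ⊆ {v}} := by
  classical
  refine ⟨?_, ?_, ?_⟩
  · -- MapsTo
    intro f hf
    rw [Set.mem_setOf_eq, minimalRDF_iff] at hf
    exact hf.2.2
  · -- InjOn
    intro f hf g hg hfg
    rw [Set.mem_setOf_eq, minimalRDF_iff] at hf hg
    simp only at hfg
    have h2iff : ∀ v, f v = 2 ↔ g v = 2 := by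
      intro v
      constructor
      · intro h; have : v ∈ ({w | g w = 2} : Set V) := hfg ▸ h; exact this
      · intro h; have : v ∈ ({w | f w = 2} : Set V) := hfg.symm ▸ h; exact this
    have key : ∀ f g : V → Fin 3, IsRDF G f →
        (∀ v, g v = 1 → ∀ u, G.Adj v u → g u ≠ 2) →
        (∀ v, f v = 2 ↔ g v = 2) → ∀ v, f v = 0 → g v = 0 := by
      intro f g hfR hg1 hiff v hfv
      obtain ⟨u, hu, hu2⟩ := hfR v hfv
      have hgu2 : g u = 2 := (hiff u).mp hu2
      have hgv2 : g v ≠ 2 := fun h => by rw [(hiff v).mpr h] at hfv; omega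
      rcases (show g v = 0 ∨ g v = 1 by omega) with h | h
      · exact h
      · exact absurd hgu2 (hg1 v h u hu)
    funext v
    rcases (show f v = 0 ∨ f v = 1 ∨ f v = 2 by omega) with h | h | h
    · rw [h, key f g hf.1 hg.2.1 h2iff v h]
    · have hg2 : g v ≠ 2 := fun hh => by
        have := (h2iff v).mpr hh; omega
      have hg0 : g v ≠ 0 := fun hh => by
        have := key g f hg.1 hf.2.1 (fun w => (h2iff w).symm) v hh; omega
      rw [h]; omega
    · rw [h, (h2iff v).mp h]
  · -- SurjOn
    intro D hD
    rw [Set.mem_setOf_eq] at hD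
    refine ⟨rdfOf G D, ?_, rdfOf_V2 G D⟩
    rw [Set.mem_setOf_eq, minimalRDF_iff]
    have hV2 := rdfOf_V2 G D
    have hmem2 : ∀ u, rdfOf G D u = 2 ↔ u ∈ D := fun u =>
      ⟨fun h => hV2 ▸ h, fun h => by simp [rdfOf, h]⟩
    refine ⟨?_, ?_, ?_⟩
    · intro v hv
      by_cases h : v ∈ D
      · simp [rdfOf, h] at hv
      · by_cases h' : ∃ u, G.Adj v u ∧ u ∈ D
        · obtain ⟨u, hu, huD⟩ := h'
          exact ⟨u, hu, (hmem2 u).mpr huD⟩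
        · simp [rdfOf, h, h'] at hv
    · intro v hv u hu hu2
      have huD : u ∈ D := (hmem2 u).mp hu2
      by_cases h : v ∈ D
      · simp [rdfOf, h] at hv
      · have h' : ∃ u, G.Adj v u ∧ u ∈ D := ⟨u, hu, huD⟩
        simp [rdfOf, h, h'] at hv
    · intro v hv
      rw [hV2]
      exact hD v ((hmem2 v).mp hv)
end

section
/- For every positive integer c there exists a finite undirected simple graph of order n = 5c that has at least 16^{n/5} = (16^{1/5})^n many minimal Roman dominating functions (note 16^{1/5} > 1.7441). -/
variable {V : Type*}

def C5 : SimpleGraph (Fin 5) where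
  Adj a b := a ≠ b ∧ ((a.val + 1) % 5 = b.val ∨ (b.val + 1) % 5 = a.val)
  symm := ⟨by decide⟩
  loopless := ⟨by decide⟩

instance : DecidableRel C5.Adj := fun a b =>
  inferInstanceAs (Decidable (a ≠ b ∧ ((a.val + 1) % 5 = b.val ∨ (b.val + 1) % 5 = a.val)))

def rdfList : Fin 16 → Fin 5 → Fin 3 :=
  ![![0,2,0,0,2], ![0,1,1,0,2], ![0,0,2,0,2], ![0,2,2,0,1],
    ![0,2,0,1,1], ![0,1,0,2,2], ![0,2,0,2,0], ![1,0,2,0,1],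
    ![1,1,1,1,1], ![1,1,0,2,0], ![1,0,2,2,0], ![2,0,1,0,2],
    ![2,0,2,0,0], ![2,2,0,1,0], ![2,0,1,1,0], ![2,0,0,2,0]]

lemma rdfList_inj : Function.Injective rdfList := by decide

lemma rdfList_min : ∀ i, IsMinimalRDF C5 (rdfList i) := by
  unfold IsMinimalRDF IsRDF
  set_option maxRecDepth 10000 in decide

/-- c disjoint copies of the 5-cycle. -/
def Gc (c : ℕ) : SimpleGraph (Fin c × Fin 5) where
  Adj p q := p.1 = q.1 ∧ C5.Adj p.2 q.2
  symm := ⟨fun p q h => ⟨h.1.symm, C5.adj_symm h.2⟩⟩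
  loopless := ⟨fun p h => C5.loopless.irrefl p.2 h.2⟩

theorem stmt_12 (c : ℕ) (hc : 0 < c) :
    ∃ (V : Type) (_ : Fintype V) (G : SimpleGraph V),
      Nat.card V = 5 * c ∧
      16 ^ c ≤ {f : V → Fin 3 | IsMinimalRDF G f}.ncard := by
  refine ⟨Fin c × Fin 5, inferInstance, Gc c, ?_, ?_⟩
  · simp [Nat.card_eq_fintype_card, mul_comm]
  · set φ : (Fin c → Fin 16) → (Fin c × Fin 5 → Fin 3) :=
      fun t p => rdfList (t p.1) p.2 with hφ
    have hmem : ∀ t, IsMinimalRDF (Gc c) (φ t) := by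
      intro t
      constructor
      · intro p hp
        obtain ⟨u, hu, hu2⟩ := (rdfList_min (t p.1)).1 p.2 hp
        exact ⟨(p.1, u), (⟨rfl, hu⟩ : p.1 = p.1 ∧ C5.Adj p.2 u), hu2⟩
      · intro g hg hle
        funext p
        obtain ⟨a, x⟩ := p
        have hga : (fun x => g (a, x)) = rdfList (t a) := by
          apply (rdfList_min (t a)).2
          · intro x hx
            obtain ⟨⟨b, u⟩, hadj', h2⟩ := hg (a, x) hx
            obtain ⟨hab, hadj⟩ : a = b ∧ C5.Adj x u := hadj'
            cases hab
            exact ⟨u, hadj, h2⟩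
          · intro x
            exact hle (a, x)
        exact congrFun hga x
    have hinj : Function.Injective φ := by
      intro t t' h
      funext a
      apply rdfList_inj
      funext x
      exact congrFun h (a, x)
    calc 16 ^ c = Nat.card (Fin c → Fin 16) := by
            simp [Nat.card_eq_fintype_card]
      _ = (Set.univ : Set (Fin c → Fin 16)).ncard := (Set.ncard_univ _).symm
      _ = (φ '' Set.univ).ncard := (Set.ncard_image_of_injective _ hinj).symm
      _ ≤ {f : Fin c × Fin 5 → Fin 3 | IsMinimalRDF (Gc c) f}.ncard := by
            apply Set.ncard_le_ncard _ (Set.toFinite _)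
            rintro f ⟨t, -, rfl⟩
            exact hmem t
end

section
/- For every ε > 0, there is no constant C such that every connected finite undirected simple graph of order n has at most C·(2 − ε)^n PO-minimal Roman dominating functions; indeed, the star K_{1,n} is a connected graph of order n + 1 with 2^n + 1 PO-minimal Roman dominating functions. -/
variable {V : Type*}

/-- f ≤_PO g : pointwise lifting of the partial order 0 < 1, 0 < 2 on values. -/
def POle (f g : V → Fin 3) : Prop :=
  (∀ v, f v = 1 → g v = 1) ∧ (∀ v, f v = 2 → g v = 2)

/-- PO-minimal Roman dominating function. -/
def IsPOMinimalRDF (G : SimpleGraph V) (f : V → Fin 3) : Prop :=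
  IsRDF G f ∧ ∀ g : V → Fin 3, IsRDF G g → POle g f → g = f

/-- The star K_{1,n}: vertex 0 is the center, adjacent to each of the n leaves. -/
def starGraph (n : ℕ) : SimpleGraph (Fin (n + 1)) :=
  SimpleGraph.fromRel (fun i _ => i = 0)

lemma fin3_cases : ∀ x : Fin 3, x = 0 ∨ x = 1 ∨ x = 2 := by decide

lemma star_adj {n : ℕ} (i j : Fin (n + 1)) :
    (starGraph n).Adj i j ↔ i ≠ j ∧ (i = 0 ∨ j = 0) := by
  simp [starGraph, SimpleGraph.fromRel_adj]

lemma star_adj_to_zero {n : ℕ} {i : Fin (n + 1)} (h : i ≠ 0) :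
    (starGraph n).Adj i 0 := by
  rw [star_adj]; exact ⟨h, Or.inr rfl⟩

lemma star_connected (n : ℕ) : (starGraph n).Connected := by
  rw [SimpleGraph.connected_iff]
  refine ⟨?_, ⟨0⟩⟩
  have key : ∀ u : Fin (n + 1), (starGraph n).Reachable u 0 := by
    intro u
    by_cases h : u = 0
    · subst h; rfl
    · exact (star_adj_to_zero h).reachable
  intro v w
  exact (key v).trans (key w).symm

/-- Characterization of PO-minimal RDFs on the star. -/
lemma star_char (n : ℕ) (f : Fin (n + 1) → Fin 3) :
    IsPOMinimalRDF (starGraph n) f ↔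
      f = (fun _ => 1) ∨ f = (fun i => if i = 0 then 2 else 0) ∨
        (f 0 = 0 ∧ (∀ i, i ≠ 0 → f i ≠ 0) ∧ ∃ i, i ≠ 0 ∧ f i = 2) := by
  constructor
  · rintro ⟨hrdf, hmin⟩
    -- if a leaf has value 0, the center has value 2
    have leaf0 : ∀ i : Fin (n + 1), i ≠ 0 → f i = 0 → f 0 = 2 := by
      intro i hi hfi
      obtain ⟨u, hadj, hu⟩ := hrdf i hfi
      rw [star_adj] at hadj
      have : u = 0 := by tauto
      rwa [this] at hu
    rcases fin3_cases (f 0) with h0 | h0 | h0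
    · -- center 0 : third family
      refine Or.inr (Or.inr ⟨h0, ?_, ?_⟩)
      · intro i hi hfi
        have := leaf0 i hi hfi
        rw [h0] at this; exact absurd this (by decide)
      · obtain ⟨u, hadj, hu⟩ := hrdf 0 h0
        rw [star_adj] at hadj
        exact ⟨u, fun h => hadj.1 h.symm, hu⟩
    · -- center 1 : all ones
      left
      have leafs : ∀ i : Fin (n + 1), i ≠ 0 → f i = 1 := by
        intro i hi
        rcases fin3_cases (f i) with h | h | h
        · have := leaf0 i hi h
          rw [h0] at this; exact absurd this (by decide)
        · exact h
        · -- a leaf is 2: zero out the center, contradiction with minimality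
          exfalso
          set g : Fin (n + 1) → Fin 3 := Function.update f 0 0 with hg
          have hgne : ∀ v, v ≠ 0 → g v = f v := fun v hv =>
            Function.update_of_ne hv _ _
          have hg0 : g 0 = 0 := Function.update_self _ _ _
          have grdf : IsRDF (starGraph n) g := by
            intro v hv
            by_cases hv0 : v = 0
            · subst hv0
              refine ⟨i, (star_adj_to_zero hi).symm, ?_⟩
              rw [hgne i hi]; exact h
            · rw [hgne v hv0] at hv
              rcases fin3_cases (f v) with h' | h' | h' <;>
                simp_all
          have hple : POle g f := by
            constructor <;> intro v hv
            · by_cases hv0 : v = 0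
              · subst hv0; rw [hg0] at hv; exact absurd hv (by decide)
              · rw [← hgne v hv0]; exact hv
            · by_cases hv0 : v = 0
              · subst hv0; rw [hg0] at hv; exact absurd hv (by decide)
              · rw [← hgne v hv0]; exact hv
          have := hmin g grdf hple
          have : g 0 = f 0 := by rw [this]
          rw [hg0, h0] at this
          exact absurd this (by decide)
      funext i
      by_cases hi : i = 0
      · subst hi; exact h0
      · exact leafs i hi
    · -- center 2 : all leaves 0
      refine Or.inr (Or.inl ?_)
      have leafs : ∀ i : Fin (n + 1), i ≠ 0 → f i = 0 := by
        intro i hi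
        by_contra hfi
        set g : Fin (n + 1) → Fin 3 := Function.update f i 0 with hg
        have hgne : ∀ v, v ≠ i → g v = f v := fun v hv =>
          Function.update_of_ne hv _ _
        have hgi : g i = 0 := Function.update_self _ _ _
        have hg0 : g 0 = f 0 := hgne 0 (fun h => hi h.symm)
        have grdf : IsRDF (starGraph n) g := by
          intro v hv
          have hv0 : v ≠ 0 := by
            intro h; subst h; rw [hg0, h0] at hv; exact absurd hv (by decide)
          exact ⟨0, star_adj_to_zero hv0, by rw [hg0]; exact h0⟩
        have hple : POle g f := by
          constructor <;> intro v hv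
          · by_cases hvi : v = i
            · subst hvi; rw [hgi] at hv; exact absurd hv (by decide)
            · rw [← hgne v hvi]; exact hv
          · by_cases hvi : v = i
            · subst hvi; rw [hgi] at hv; exact absurd hv (by decide)
            · rw [← hgne v hvi]; exact hv
        have := hmin g grdf hple
        have : g i = f i := by rw [this]
        rw [hgi] at this
        exact hfi this.symm
      funext i
      by_cases hi : i = 0
      · subst hi; simp [h0]
      · simp [hi, leafs i hi]
  · rintro (hf | rfl | ⟨h0, hleaf, j, hj, hj2⟩)
    · -- all ones
      have hfv : ∀ v, f v = 1 := fun v => by rw [hf]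
      refine ⟨fun v hv => ?_, ?_⟩
      · rw [hfv v] at hv; exact absurd hv (by decide)
      rintro g grdf ⟨hp1, hp2⟩
      funext v
      rcases fin3_cases (g v) with h | h | h
      · exfalso
        obtain ⟨u, _, hu⟩ := grdf v h
        have := hp2 u hu
        rw [hfv u] at this
        exact absurd this (by decide)
      · rw [h, hp1 v h]
      · have := hp2 v h
        rw [hfv v] at this
        exact absurd this (by decide)
    · -- center 2, leaves 0
      refine ⟨?_, ?_⟩
      · intro v hv
        have hv0 : v ≠ 0 := by
          intro h; subst h; simp at hv
        exact ⟨0, star_adj_to_zero hv0, by simp⟩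
      · rintro g grdf ⟨hp1, hp2⟩
        have hg0 : g 0 = 2 := by
          rcases fin3_cases (g 0) with h | h | h
          · exfalso
            obtain ⟨u, hadj, hu⟩ := grdf 0 h
            have := hp2 u hu
            rw [star_adj] at hadj
            have hu0 : u ≠ 0 := fun hh => hadj.1 hh.symm
            simp [hu0] at this
          · have := hp1 0 h; simp at this
          · exact h
        funext v
        by_cases hv : v = 0
        · subst hv; simp [hg0]
        · rcases fin3_cases (g v) with h | h | h
          · simp [hv, h]
          · have := hp1 v h; simp [hv] at this
          · have := hp2 v h; simp [hv] at this
    · -- center 0, leaves nonzero, some leaf 2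
      refine ⟨?_, ?_⟩
      · intro v hv
        by_cases hv0 : v = 0
        · subst hv0
          exact ⟨j, (star_adj_to_zero hj).symm, hj2⟩
        · exact absurd hv (hleaf v hv0)
      · rintro g grdf ⟨hp1, hp2⟩
        funext v
        by_cases hv : v = 0
        · subst hv
          rcases fin3_cases (g 0) with h | h | h
          · rw [h, h0]
          · have := hp1 0 h; rw [h0] at this; exact absurd this (by decide)
          · have := hp2 0 h; rw [h0] at this; exact absurd this (by decide)
        · rcases fin3_cases (g v) with h | h | h
          · exfalso
            obtain ⟨u, hadj, hu⟩ := grdf v h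
            rw [star_adj] at hadj
            have hu0 : u = 0 := by tauto
            subst hu0
            have := hp2 0 hu
            rw [h0] at this; exact absurd this (by decide)
          · rw [h, hp1 v h]
          · rw [h, hp2 v h]

/-- Parameterization of the functions with center 0 and nonzero leaves. -/
noncomputable def starPsi (n : ℕ) (g : Fin n → Bool) : Fin (n + 1) → Fin 3 :=
  Fin.cases 0 (fun j => if g j then 2 else 1)

lemma starPsi_zero (n : ℕ) (g : Fin n → Bool) : starPsi n g 0 = 0 := rfl

lemma starPsi_succ (n : ℕ) (g : Fin n → Bool) (j : Fin n) :
    starPsi n g j.succ = if g j then 2 else 1 := by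
  simp [starPsi]

lemma starPsi_injective (n : ℕ) : Function.Injective (starPsi n) := by
  intro g g' h
  funext j
  have := congrFun h j.succ
  rw [starPsi_succ, starPsi_succ] at this
  cases hg : g j <;> cases hg' : g' j <;> simp_all

lemma star_count (n : ℕ) :
    {f : Fin (n + 1) → Fin 3 | IsPOMinimalRDF (starGraph n) f}.ncard = 2 ^ n + 1 := by
  classical
  set c1 : Fin (n + 1) → Fin 3 := (fun _ => 1) with hc1
  set c2 : Fin (n + 1) → Fin 3 := (fun i => if i = 0 then 2 else 0) with hc2
  set T : Set (Fin (n + 1) → Fin 3) :=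
    {f | f 0 = 0 ∧ (∀ i, i ≠ 0 → f i ≠ 0) ∧ ∃ i, i ≠ 0 ∧ f i = 2} with hT
  have hset : {f : Fin (n + 1) → Fin 3 | IsPOMinimalRDF (starGraph n) f}
      = insert c1 (insert c2 T) := by
    ext f
    rw [Set.mem_setOf_eq, star_char n f]
    simp [Set.mem_insert_iff, hT, Set.mem_setOf_eq, hc1, hc2]
  rw [hset]
  have hTim : T = starPsi n '' {g : Fin n → Bool | g ≠ fun _ => false} := by
    ext f
    constructor
    · rintro ⟨h0, hleaf, j, hj, hj2⟩
      obtain ⟨j', rfl⟩ := Fin.eq_succ_of_ne_zero hj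
      refine ⟨fun k => decide (f k.succ = 2), ?_, ?_⟩
      · intro hfa
        have := congrFun hfa j'
        simp [hj2] at this
      · funext i
        refine Fin.cases ?_ (fun k => ?_) i
        · rw [starPsi_zero]; exact h0.symm
        · rw [starPsi_succ]
          rcases fin3_cases (f k.succ) with h | h | h
          · exact absurd h (hleaf k.succ (Fin.succ_ne_zero k))
          · simp [h]
          · simp [h]
    · rintro ⟨g, hg, rfl⟩
      refine ⟨starPsi_zero n g, ?_, ?_⟩
      · intro i hi
        obtain ⟨k, rfl⟩ := Fin.eq_succ_of_ne_zero hi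
        rw [starPsi_succ]
        cases g k <;> simp
      · have : ∃ k, g k = true := by
          by_contra hk
          push_neg at hk
          apply hg
          funext k
          simpa using hk k
        obtain ⟨k, hk⟩ := this
        exact ⟨k.succ, Fin.succ_ne_zero k, by rw [starPsi_succ, hk]; simp⟩
  have hTcard : T.ncard = 2 ^ n - 1 := by
    rw [hTim, Set.ncard_image_of_injective _ (starPsi_injective n)]
    have : {g : Fin n → Bool | g ≠ fun _ => false}
        = Set.univ \ {fun _ => false} := by
      ext g; simp
    rw [this, Set.ncard_diff_singleton_of_mem (Set.mem_univ _), Set.ncard_univ]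
    simp [Nat.card_eq_fintype_card]
  have hc2T : c2 ∉ T := by
    intro h
    have := h.1
    simp [hc2] at this
  have hc1T : c1 ∉ insert c2 T := by
    rintro (h | h)
    · have := congrFun h 0
      simp only [hc1, hc2, if_pos rfl] at this
      exact absurd this (by decide)
    · have := h.1
      simp only [hc1] at this
      exact absurd this (by decide)
  rw [Set.ncard_insert_of_notMem hc1T (Set.toFinite _),
    Set.ncard_insert_of_notMem hc2T (Set.toFinite _), hTcard]
  have : 1 ≤ 2 ^ n := Nat.one_le_two_pow
  omega

theorem stmt_17 :
    (∀ ε : ℝ, 0 < ε → ¬ ∃ C : ℝ,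
      ∀ (W : Type) [Fintype W] (G : SimpleGraph W), G.Connected →
        ({f : W → Fin 3 | IsPOMinimalRDF G f}.ncard : ℝ) ≤
          C * (2 - ε) ^ (Fintype.card W)) ∧
    (∀ n : ℕ, 1 ≤ n →
      (starGraph n).Connected ∧ Fintype.card (Fin (n + 1)) = n + 1 ∧
      {f : Fin (n + 1) → Fin 3 | IsPOMinimalRDF (starGraph n) f}.ncard = 2 ^ n + 1) := by
  constructor
  · rintro ε hε ⟨C, hC⟩
    set b : ℝ := 2 - ε with hb
    have hblt : b < 2 := by simp [hb]; linarith
    have key : ∀ n : ℕ, ((2 : ℝ) ^ n + 1) ≤ C * b ^ (n + 1) := by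
      intro n
      have h := hC (Fin (n + 1)) (starGraph n) (star_connected n)
      rw [star_count n, Fintype.card_fin] at h
      push_cast at h
      linarith
    rcases le_or_gt C 0 with hc | hc
    · have h1 := key 1
      have hb2 : (0 : ℝ) ≤ b ^ 2 := sq_nonneg b
      have : C * b ^ (1 + 1) ≤ 0 := by
        have := mul_nonpos_of_nonpos_of_nonneg hc hb2
        simpa using this
      have h2 : (2 : ℝ) ^ 1 + 1 = 3 := by norm_num
      linarith
    · rcases le_or_gt b 0 with hb0 | hb0
      · have h2 := key 2
        have hb3 : b ^ 3 ≤ 0 := Odd.pow_nonpos ⟨1, rfl⟩ hb0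
        have : C * b ^ (2 + 1) ≤ 0 := by
          have := mul_nonpos_of_nonneg_of_nonpos hc.le hb3
          simpa using this
        have : (2 : ℝ) ^ 2 + 1 = 5 := by norm_num
        linarith
      · -- 0 < b < 2
        set r : ℝ := b / 2 with hr
        have hr0 : 0 < r := by positivity
        have hr1 : r < 1 := by rw [hr]; linarith
        have hcb : 0 < C * b := mul_pos hc hb0
        obtain ⟨m, hm⟩ := exists_pow_lt_of_lt_one (by positivity : (0 : ℝ) < 1 / (C * b)) hr1
        set n := max m 1 with hn
        have hrn : r ^ n ≤ r ^ m :=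
          pow_le_pow_of_le_one hr0.le hr1.le (le_max_left m 1)
        have hkey := key n
        have hb2r : b = 2 * r := by rw [hr]; ring
        have hsmall : C * b * r ^ n < 1 := by
          have h1 : C * b * r ^ n ≤ C * b * r ^ m :=
            mul_le_mul_of_nonneg_left hrn hcb.le
          have h2 : r ^ m * (C * b) < 1 := (lt_div_iff₀ hcb).mp hm
          calc C * b * r ^ n ≤ C * b * r ^ m := h1
            _ = r ^ m * (C * b) := by ring
            _ < 1 := h2
        have heq : C * b ^ (n + 1) = C * b * r ^ n * 2 ^ n := by
          rw [hb2r, mul_pow]; ring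
        have hpow : (0 : ℝ) < 2 ^ n := by positivity
        have : C * b ^ (n + 1) < 2 ^ n := by
          rw [heq]
          calc C * b * r ^ n * 2 ^ n < 1 * 2 ^ n :=
                mul_lt_mul_of_pos_right hsmall hpow
            _ = 2 ^ n := one_mul _
        linarith
  · intro n hn
    exact ⟨star_connected n, Fintype.card_fin _, star_count n⟩
end
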